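/- For all s ∈ (0,1], τ* ∈ [π/2, π) and τ₀ ∈ [0, π/2], there exists r ∈ [−1/2, 1) such that ⋄^{τ*}_{τ₀,s} = {(τ₀, ξ) : ξ ∈ S³, ξ⁴ ≤ r}; in particular each ⋄^{τ*}_{τ₀,s} is a closed geodesic ball (a sublevel set of ξ⁴) in the sphere {τ₀} × S³, of radius bounded below uniformly. -/

import Mathlib

/-!
On the slice `τ = τ₀` every constraint depends on `ξ` only through `x = ξ⁴ ∈ [-1, 1]`: lying in
`⋄₊` means `x < cos τ₀`, avoiding `Δ_{<s/6}` means `s/6 · (cos τ₀ + x) ≤ 2 sin τ₀ + √(1 - x²)`, and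
the bound on `φ` is linear in `x`. The last two constraints already force the first, and they cut
out a closed subset of `[-1, 1]` that is closed downwards: the second constraint is vacuous
for `x ≤ -cos τ₀`, and beyond that `(2 sin τ₀ + √(1 - x²)) / (cos τ₀ + x)` decreases in `x`. Hence it is `[-1, r]` with `r` its
supremum, and `r ≥ -1/2` since `x = -1/2` satisfies both constraints.
-/

/-- The unit three-sphere in `ℝ⁴` (as the set of `ξ : Fin 4 → ℝ` of unit length,
indexed so that `ξ 3 = ξ⁴`). -/
def sphere3 : Set (Fin 4 → ℝ) := {ξ | (ξ 0) ^ 2 + (ξ 1) ^ 2 + (ξ 2) ^ 2 + (ξ 3) ^ 2 = 1}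

/-- `h(τ,ξ) = cos τ - ξ⁴`. -/
noncomputable def hfun (p : ℝ × (Fin 4 → ℝ)) : ℝ := Real.cos p.1 - p.2 3

/-- `ℏ(τ,ξ) = cos τ + ξ⁴`. -/
noncomputable def hbarfun (p : ℝ × (Fin 4 → ℝ)) : ℝ := Real.cos p.1 + p.2 3

/-- `𝔰(τ,ξ) = (2 sin τ + √(1 - (ξ⁴)²)) / ℏ(τ,ξ)`. -/
noncomputable def sfun (p : ℝ × (Fin 4 → ℝ)) : ℝ :=
  (2 * Real.sin p.1 + Real.sqrt (1 - (p.2 3) ^ 2)) / hbarfun p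

/-- The future half of the Minkowski diamond,
`⋄₊ = {(τ,ξ) ∈ [0,π) × S³ : h(τ,ξ) > 0}`. -/
def diamondPlus : Set (ℝ × (Fin 4 → ℝ)) :=
  {p | p.2 ∈ sphere3 ∧ 0 ≤ p.1 ∧ p.1 < Real.pi ∧ 0 < hfun p}

/-- `Δ_{<r} = {(τ,ξ) ∈ ⋄₊ : ℏ(τ,ξ) > 0 and 𝔰(τ,ξ) < r}`. -/
noncomputable def deltaLT (r : ℝ) : Set (ℝ × (Fin 4 → ℝ)) :=
  {p ∈ diamondPlus | 0 < hbarfun p ∧ sfun p < r}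

/-- `⋄ₛ = ⋄₊ \ Δ_{<s/6}`. -/
noncomputable def diamondS (s : ℝ) : Set (ℝ × (Fin 4 → ℝ)) := diamondPlus \ deltaLT (s / 6)

/-- `⋄_{τ,s} = ({τ} × S³) ∩ ⋄ₛ`. -/
noncomputable def diamondTauS (τ s : ℝ) : Set (ℝ × (Fin 4 → ℝ)) :=
  ({τ} ×ˢ (Set.univ : Set (Fin 4 → ℝ))) ∩ diamondS s

/-- `φ(τ,ξ) = √((1 - cos τ)/(1 - ξ⁴))`. -/
noncomputable def phifun (p : ℝ × (Fin 4 → ℝ)) : ℝ :=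
  Real.sqrt ((1 - Real.cos p.1) / (1 - p.2 3))

/-- `⋄^{τ*} = {(τ,ξ) ∈ ⋄₊ : 0 ≤ τ ≤ τ* and φ(τ,ξ) ≤ √((1 - cos((τ*+π)/2))/2)}`. -/
noncomputable def diamondUpTo (τstar : ℝ) : Set (ℝ × (Fin 4 → ℝ)) :=
  {p ∈ diamondPlus | 0 ≤ p.1 ∧ p.1 ≤ τstar ∧
    phifun p ≤ Real.sqrt ((1 - Real.cos ((τstar + Real.pi) / 2)) / 2)}

open Real Set

lemma sqrt_one_sub_sq_mul_add_le {c x y : ℝ} (hc₀ : 0 ≤ c) (hc₁ : c ≤ 1) (hx : -c < x)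
    (hxy : x ≤ y) (hy : y ≤ 1) :
    √(1 - y ^ 2) * (c + x) ≤ √(1 - x ^ 2) * (c + y) := by
  have hcx : 0 < c + x := by linarith
  have hcy : 0 < c + y := by linarith
  rw [← sqrt_sq hcx.le, ← sqrt_sq hcy.le, ← sqrt_mul' _ (sq_nonneg _),
    ← sqrt_mul' _ (sq_nonneg _)]
  apply sqrt_le_sqrt
  -- (1 - x²)(c + y)² - (1 - y²)(c + x)² = (y - x)((1 + cx)(c + y) + (1 + cy)(c + x))
  have h₁ : 0 < 1 + c * x := by nlinarith
  have h₂ : 0 < 1 + c * y := by nlinarith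
  nlinarith [mul_nonneg (sub_nonneg.2 hxy)
    (add_pos (mul_pos h₁ hcy) (mul_pos h₂ hcx)).le]

lemma mul_add_le_add_sqrt_of_le {a b c x y : ℝ} (ha : 0 ≤ a) (hb : 0 ≤ b) (hc₀ : 0 ≤ c)
    (hc₁ : c ≤ 1) (hxy : x ≤ y) (hy : y ≤ 1) (h : a * (c + y) ≤ b + √(1 - y ^ 2)) :
    a * (c + x) ≤ b + √(1 - x ^ 2) := by
  rcases le_or_gt (c + x) 0 with hcx | hcx
  · nlinarith [sqrt_nonneg (1 - x ^ 2)]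
  have hcy : 0 < c + y := by linarith
  have hmono := sqrt_one_sub_sq_mul_add_le hc₀ hc₁ (by linarith) hxy hy
  refine le_of_mul_le_mul_right ?_ hcy
  calc a * (c + x) * (c + y) = a * (c + y) * (c + x) := by ring
    _ ≤ (b + √(1 - y ^ 2)) * (c + x) := mul_le_mul_of_nonneg_right h hcx.le
    _ ≤ (b + √(1 - x ^ 2)) * (c + y) := by nlinarith

theorem IsClosed.eq_Icc_csSup {α : Type*} [ConditionallyCompleteLinearOrder α]
    [TopologicalSpace α] [OrderTopology α] {S : Set α} {lo : α} (hS : IsClosed S)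
    (hlo : ∀ x ∈ S, lo ≤ x) (hbdd : BddAbove S) (hne : S.Nonempty)
    (hdown : ∀ ⦃x y⦄, lo ≤ x → x ≤ y → y ∈ S → x ∈ S) :
    S = Icc lo (sSup S) := by
  ext x
  exact ⟨fun hx => ⟨hlo x hx, le_csSup hbdd hx⟩,
    fun hx => hdown hx.1 hx.2 (hS.csSup_mem hne hbdd)⟩

lemma exists_setOf_mul_add_le_add_sqrt_eq_Icc {a c σ C : ℝ} (ha₀ : 0 < a) (ha₁ : a ≤ 1)
    (hc : 0 ≤ c) (hσ : 0 ≤ σ) (hσc : σ ^ 2 + c ^ 2 = 1) (hC₀ : 2 / 3 ≤ C) (hC₁ : C < 1) :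
    ∃ r, -(1 / 2) ≤ r ∧ r < c ∧
      {x ∈ Icc (-1) 1 | a * (c + x) ≤ 2 * σ + √(1 - x ^ 2) ∧ 1 - c ≤ C * (1 - x)} =
        Icc (-1) r := by
  set G := {x ∈ Icc (-1) 1 | a * (c + x) ≤ 2 * σ + √(1 - x ^ 2) ∧ 1 - c ≤ C * (1 - x)}
  have hc₁ : c ≤ 1 := by nlinarith
  have hclosed : IsClosed G := by
    refine isClosed_Icc.inter ((isClosed_le ?_ ?_).and (isClosed_le ?_ ?_)) <;> fun_prop
  have hbdd : BddAbove G := ⟨1, fun x hx => hx.1.2⟩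
  have half_mem : -(1 / 2) ∈ G := by
    have : 1 / 2 ≤ √(1 - (-(1 / 2)) ^ 2) := by rw [le_sqrt] <;> norm_num
    exact ⟨by norm_num, by nlinarith, by nlinarith⟩
  have hdown : ∀ ⦃x y⦄, -1 ≤ x → x ≤ y → y ∈ G → x ∈ G := fun x y hx hxy hy =>
    ⟨⟨hx, hxy.trans hy.1.2⟩,
      mul_add_le_add_sqrt_of_le ha₀.le (by positivity) hc hc₁ hxy hy.1.2 hy.2.1,
      by nlinarith [hy.2.2]⟩
  obtain ⟨⟨-, hr₁⟩, hrB, hrC⟩ := hclosed.csSup_mem ⟨_, half_mem⟩ hbdd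
  refine ⟨sSup G, le_csSup hbdd half_mem, ?_,
    hclosed.eq_Icc_csSup (fun x hx => hx.1.1) hbdd ⟨_, half_mem⟩ hdown⟩
  by_contra! hcr
  -- the φ-constraint forces `c = 1 = sSup G`, where the 𝔰-constraint reads `2a ≤ 0`
  have hc1 : c = 1 := by nlinarith
  have hr1 : sSup G = 1 := by nlinarith
  have hσ0 : σ = 0 := by nlinarith
  rw [hc1, hr1, hσ0] at hrB
  norm_num at hrB
  linarith

lemma cos_mem_Ioc_of_two_pi_div_three_le {θ : ℝ} (h₁ : 2 * π / 3 ≤ θ) (h₂ : θ < π) :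
    cos θ ∈ Ioc (-1) (-(1 / 2)) := by
  have hθ : 0 ≤ θ := le_trans (by positivity) h₁
  refine ⟨?_, ?_⟩
  · simpa using cos_lt_cos_of_nonneg_of_le_pi hθ le_rfl h₂
  · have h : cos (2 * π / 3) = -(1 / 2) := by
      rw [show 2 * π / 3 = π - π / 3 by ring, cos_pi_sub, cos_pi_div_three]
    exact h ▸ cos_le_cos_of_nonneg_of_le_pi (by positivity) h₂.le h₁

lemma mem_Icc_of_mem_sphere3 {ξ : Fin 4 → ℝ} (h : ξ ∈ sphere3) : ξ 3 ∈ Icc (-1) 1 := by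
  have : ξ 3 ^ 2 ≤ 1 := by
    simp only [sphere3, mem_ofPred_eq] at h
    nlinarith [sq_nonneg (ξ 0), sq_nonneg (ξ 1), sq_nonneg (ξ 2)]
  exact ⟨by nlinarith, by nlinarith⟩

lemma imp_le_div_iff_mul_le {a b d : ℝ} (ha : 0 ≤ a) (hb : 0 ≤ b) :
    (0 < d → a ≤ b / d) ↔ a * d ≤ b := by
  rcases lt_or_ge 0 d with hd | hd
  · simp [hd, le_div_iff₀ hd]
  · exact ⟨fun _ => (mul_nonpos_of_nonneg_of_nonpos ha hd).trans hb, fun _ h => absurd h hd.not_gt⟩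

lemma mem_diamondTauS_iff {τ s : ℝ} (hs : 0 ≤ s) (hτ : 0 ≤ sin τ) {p : ℝ × (Fin 4 → ℝ)} :
    p ∈ diamondTauS τ s ↔
      p.1 = τ ∧ p ∈ diamondPlus ∧ s / 6 * hbarfun p ≤ 2 * sin p.1 + √(1 - p.2 3 ^ 2) := by
  simp only [diamondTauS, diamondS, deltaLT, sfun, mem_inter_iff, mem_prod, mem_singleton_iff,
    mem_univ, and_true, mem_sdiff, mem_sep_iff, not_and, and_congr_right_iff]
  rintro rfl hp
  rw [← imp_le_div_iff_mul_le (by positivity) (by positivity)]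
  simp only [hp, true_implies, not_lt]

lemma phifun_le_sqrt_iff {C : ℝ} (hC : 0 ≤ C) {p : ℝ × (Fin 4 → ℝ)} (hp : p.2 3 < 1) :
    phifun p ≤ √C ↔ 1 - cos p.1 ≤ C * (1 - p.2 3) := by
  rw [phifun, sqrt_le_sqrt_iff hC, div_le_iff₀ (by linarith)]

lemma mem_diamondTauS_inter_diamondUpTo_iff {s τstar τ₀ : ℝ} (hs : 0 ≤ s) (hτ₀ : 0 ≤ τ₀)
    (hτ₀τ : τ₀ ≤ τstar) (hτπ : τstar < π) {p : ℝ × (Fin 4 → ℝ)} :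
    p ∈ diamondTauS τ₀ s ∩ diamondUpTo τstar ↔
      p.1 = τ₀ ∧ p.2 ∈ sphere3 ∧ p.2 3 < cos τ₀ ∧
        (s / 6 * (cos τ₀ + p.2 3) ≤ 2 * sin τ₀ + √(1 - p.2 3 ^ 2) ∧
          1 - cos τ₀ ≤ (1 - cos ((τstar + π) / 2)) / 2 * (1 - p.2 3)) := by
  obtain ⟨τ, ξ⟩ := p
  rw [mem_inter_iff, mem_diamondTauS_iff hs (sin_nonneg_of_nonneg_of_le_pi hτ₀ (by linarith))]
  simp only [diamondUpTo, diamondPlus, hfun, hbarfun, mem_ofPred_eq]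
  constructor
  · rintro ⟨⟨rfl, ⟨hξ, -, -, hx⟩, hB⟩, -, -, -, hφ⟩
    rw [phifun_le_sqrt_iff (by linarith [cos_le_one ((τstar + π) / 2)])
      (by linarith [cos_le_one τ])] at hφ
    exact ⟨rfl, hξ, by linarith, hB, hφ⟩
  · rintro ⟨rfl, hξ, hx, hB, hC⟩
    have hplus : ξ ∈ sphere3 ∧ 0 ≤ τ ∧ τ < π ∧ 0 < cos τ - ξ 3 :=
      ⟨hξ, hτ₀, by linarith, by linarith⟩
    refine ⟨⟨rfl, hplus, hB⟩, hplus, hτ₀, hτ₀τ, ?_⟩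
    rwa [phifun_le_sqrt_iff (by linarith [cos_le_one ((τstar + π) / 2)])
      (by linarith [cos_le_one τ])]

/-- Lemma 5.5 (lem:lowerboundballsNEW) of the paper: for `s ∈ (0,1]`,
`τ* ∈ [π/2,π)` and `τ₀ ∈ [0,π/2]` there exists `r ∈ [-1/2,1)` with
`⋄^{τ*}_{τ₀,s} = {(τ₀,ξ) : ξ ∈ S³, ξ⁴ ≤ r}`. -/
theorem stmt7 (s τstar τ₀ : ℝ) (hs : s ∈ Set.Ioc (0 : ℝ) 1)
    (hτstar : τstar ∈ Set.Ico (Real.pi / 2) Real.pi)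
    (hτ₀ : τ₀ ∈ Set.Icc (0 : ℝ) (Real.pi / 2)) :
    ∃ r : ℝ, -(1 / 2) ≤ r ∧ r < 1 ∧
      diamondTauS τ₀ s ∩ diamondUpTo τstar =
        {p : ℝ × (Fin 4 → ℝ) | p.1 = τ₀ ∧ p.2 ∈ sphere3 ∧ p.2 3 ≤ r} := by
  obtain ⟨hs₀, hs₁⟩ := hs
  obtain ⟨hτstar₁, hτstar₂⟩ := hτstar
  obtain ⟨hτ₀₁, hτ₀₂⟩ := hτ₀
  obtain ⟨hcos₁, hcos₂⟩ :=
    cos_mem_Ioc_of_two_pi_div_three_le (θ := (τstar + π) / 2) (by linarith) (by linarith)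
  obtain ⟨r, hr, hrc, hG⟩ := exists_setOf_mul_add_le_add_sqrt_eq_Icc
    (a := s / 6) (C := (1 - cos ((τstar + π) / 2)) / 2) (by positivity) (by linarith)
    (cos_nonneg_of_mem_Icc ⟨by linarith, hτ₀₂⟩) (sin_nonneg_of_nonneg_of_le_pi hτ₀₁ (by linarith))
    (sin_sq_add_cos_sq τ₀) (by linarith) (by linarith)
  refine ⟨r, hr, hrc.trans_le (cos_le_one τ₀), ?_⟩
  ext p
  rw [mem_diamondTauS_inter_diamondUpTo_iff hs₀.le hτ₀₁ (by linarith) hτstar₂, mem_ofPred_eq]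
  refine and_congr_right fun _ => and_congr_right fun hξ => ?_
  have hx := mem_Icc_of_mem_sphere3 hξ
  have hGx := Set.ext_iff.1 hG (p.2 3)
  exact ⟨fun ⟨_, hBC⟩ => (hGx.1 ⟨hx, hBC⟩).2,
    fun h => ⟨h.trans_lt hrc, (hGx.2 ⟨hx.1, h⟩).2⟩⟩
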